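/- Suppose every X ∈ Ω is adiabatically comparable with every Z ∈ E (i.e. X ≺ Z or Z ≺ X). Then S₋(X) = S₊(X) for all X ∈ Ω. (Theorem 4, implication (v) ⟹ (ii).) -/

import Mathlib

/-!
Both `S₋ X` and `S₊ X` are attained, hence lie in `S(E)`, and `S₋ X ≤ S₊ X`. If the inequality
were strict, order-density of `S(E)` would give an equilibrium state `Z` with `S₋ X < S Z < S₊ X`.
But `Z` is comparable with `X`: from `Z ≺ X` we get `S Z ≤ S₋ X`, from `X ≺ Z` we get `S₊ X ≤ S Z`.
-/

def lowerSet {Ω : Type*} (prec : Ω → Ω → Prop) (E : Set Ω) (S : Ω → ℝ) (X : Ω) : Set ℝ :=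
  {s | ∃ Z ∈ E, prec Z X ∧ S Z = s}

def upperSet {Ω : Type*} (prec : Ω → Ω → Prop) (E : Set Ω) (S : Ω → ℝ) (X : Ω) : Set ℝ :=
  {s | ∃ Z ∈ E, prec X Z ∧ S Z = s}

noncomputable def Sminus {Ω : Type*} (prec : Ω → Ω → Prop) (E : Set Ω) (S : Ω → ℝ) (X : Ω) : ℝ :=
  sSup (lowerSet prec E S X)

noncomputable def Splus {Ω : Type*} (prec : Ω → Ω → Prop) (E : Set Ω) (S : Ω → ℝ) (X : Ω) : ℝ :=
  sInf (upperSet prec E S X)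

theorem eq_of_forall_mem_le_or_le {α : Type*} [LinearOrder α] [DenselyOrdered α] {s : Set α}
    (hs : ∀ a ∈ s, ∀ b ∈ s, ∀ c : α, a < c → c < b → c ∈ s) {a b : α} (ha : a ∈ s) (hb : b ∈ s)
    (hab : a ≤ b) (hgap : ∀ c ∈ s, c ≤ a ∨ b ≤ c) : a = b := by
  refine hab.antisymm (not_lt.1 fun hlt => ?_)
  obtain ⟨c, hac, hcb⟩ := exists_between hlt
  rcases hgap c (hs a ha b hb c hac hcb) with hca | hbc
  · exact hac.not_ge hca
  · exact hcb.not_ge hbc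

section Entropy

variable {Ω : Type*} {prec : Ω → Ω → Prop} {E : Set Ω} {S : Ω → ℝ}

theorem bddAbove_lowerSet (TRANS : ∀ x y z : Ω, prec x y → prec y z → prec x z)
    (MONO : ∀ x ∈ E, ∀ y ∈ E, prec x y → S x ≤ S y) {X X'' : Ω} (hX'' : X'' ∈ E)
    (hXX'' : prec X X'') : BddAbove (lowerSet prec E S X) := by
  refine ⟨S X'', ?_⟩
  rintro _ ⟨Z, hZ, hZX, rfl⟩
  exact MONO Z hZ X'' hX'' (TRANS Z X X'' hZX hXX'')

theorem bddBelow_upperSet (TRANS : ∀ x y z : Ω, prec x y → prec y z → prec x z)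
    (MONO : ∀ x ∈ E, ∀ y ∈ E, prec x y → S x ≤ S y) {X X' : Ω} (hX' : X' ∈ E)
    (hX'X : prec X' X) : BddBelow (upperSet prec E S X) := by
  refine ⟨S X', ?_⟩
  rintro _ ⟨Z, hZ, hXZ, rfl⟩
  exact MONO X' hX' Z hZ (TRANS X' X Z hX'X hXZ)

theorem le_Sminus_or_Splus_le_of_comparable {X Z : Ω} (hA : BddAbove (lowerSet prec E S X))
    (hB : BddBelow (upperSet prec E S X)) (hZ : Z ∈ E) (hXZ : prec X Z ∨ prec Z X) :
    S Z ≤ Sminus prec E S X ∨ Splus prec E S X ≤ S Z := by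
  rcases hXZ with hXZ | hZX
  · exact Or.inr (csInf_le hB ⟨Z, hZ, hXZ, rfl⟩)
  · exact Or.inl (le_csSup hA ⟨Z, hZ, hZX, rfl⟩)

end Entropy

theorem stmt_9_general {Ω : Type*} (prec : Ω → Ω → Prop) (E : Set Ω) (S : Ω → ℝ)
    (TRANS : ∀ x y z : Ω, prec x y → prec y z → prec x z)
    (MONO : ∀ x ∈ E, ∀ y ∈ E, prec x y → S x ≤ S y)
    (ATT : ∀ X : Ω, ∃ X' ∈ E, ∃ X'' ∈ E, prec X' X ∧ prec X X'' ∧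
      S X' = Sminus prec E S X ∧ S X'' = Splus prec E S X)
    (IVT : ∀ a ∈ S '' E, ∀ b ∈ S '' E, ∀ c : ℝ, a < c → c < b → c ∈ S '' E)
    (hComp : ∀ X : Ω, ∀ Z ∈ E, prec X Z ∨ prec Z X) :
    ∀ X : Ω, Sminus prec E S X = Splus prec E S X := by
  intro X
  obtain ⟨X', hX', X'', hX'', hX'X, hXX'', hS', hS''⟩ := ATT X
  have hA := bddAbove_lowerSet TRANS MONO hX'' hXX''
  have hB := bddBelow_upperSet TRANS MONO hX' hX'X
  refine eq_of_forall_mem_le_or_le IVT ⟨X', hX', hS'⟩ ⟨X'', hX'', hS''⟩ ?_ ?_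
  · rw [← hS', ← hS'']
    exact MONO X' hX' X'' hX'' (TRANS X' X X'' hX'X hXX'')
  · rintro _ ⟨Z, hZ, rfl⟩
    exact le_Sminus_or_Splus_le_of_comparable hA hB hZ (hComp X Z hZ)

/-- Theorem 4, (v) ⟹ (ii): if every state is comparable with every
equilibrium state, then S₋ = S₊ everywhere. -/
theorem stmt_9 {Ω : Type*} (prec : Ω → Ω → Prop) (E : Set Ω) (S : Ω → ℝ)
    (TRANS : ∀ x y z : Ω, prec x y → prec y z → prec x z)
    (MONO : ∀ x ∈ E, ∀ y ∈ E, prec x y → S x ≤ S y)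
    (N2 : ∀ X : Ω, ∃ X' ∈ E, ∃ X'' ∈ E, prec X' X ∧ prec X X'')
    (CHAR : ∀ x ∈ E, ∀ y ∈ E, (prec x y ↔ S x ≤ S y))
    (ATT : ∀ X : Ω, ∃ X' ∈ E, ∃ X'' ∈ E, prec X' X ∧ prec X X'' ∧
      S X' = Sminus prec E S X ∧ S X'' = Splus prec E S X)
    (IVT : ∀ a ∈ S '' E, ∀ b ∈ S '' E, ∀ c : ℝ, a < c → c < b → c ∈ S '' E)
    (hComp : ∀ X : Ω, ∀ Z ∈ E, prec X Z ∨ prec Z X) :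
    ∀ X : Ω, Sminus prec E S X = Splus prec E S X :=
  stmt_9_general prec E S TRANS MONO ATT IVT hComp
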